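/- Let M be an S-manifold and let ∇* be the semi-symmetric metric connection ∇*_X Y = ∇_X Y + Σ_{j=1}^s η^j(Y)X − Σ_{j=1}^s g(X,Y)ξ_j, where ∇ is the Riemannian connection. Then the sectional curvature K* of ∇* satisfies: (i) K*(X,Y) = K(X,Y) − s for any orthonormal X, Y ∈ L, where K is the sectional curvature of ∇; (ii) K*(X,ξ_α) = K*(ξ_α,X) = 2 − s for any unit X ∈ L; (iii) K*(ξ_α,ξ_β) = K*(ξ_β,ξ_α) = 2 − s for α ≠ β. -/

import Mathlib

/-!
An algebraic model of a `(2n+s)`-dimensional `S`-manifold.  The type `V` models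
the space of (local, adapted) vector fields; `g` is the Riemannian metric,
`bracket` the Lie bracket of vector fields, `f` the `(1,1)`-tensor field of
rank `2n`, `ξ` the structure vector fields with dual `1`-forms `η`, and
`nabla` the Riemannian (Levi-Civita) connection of `g`.  Scalar products of
the adapted vector fields are modelled by real numbers, so the exterior
derivative of a `1`-form `ω` is given by `dω(X,Y) = -(1/2) ω([X,Y])`
(Blair's convention, with the factor `1/2`).  The field `frame` is an adapted
(local) orthonormal frame `{e_1, …, e_{2n}, ξ_1, …, ξ_s}` exhibiting the
dimension `2n+s` and the rank `2n` of `f`.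
-/
structure SManifold (n s : ℕ) where
  /-- the space of (adapted) vector fields -/
  V : Type
  [instAddCommGroup : AddCommGroup V]
  [instModule : Module ℝ V]
  /-- the Riemannian metric -/
  g : V →ₗ[ℝ] V →ₗ[ℝ] ℝ
  g_symm : ∀ X Y : V, g X Y = g Y X
  g_pos : ∀ X : V, X ≠ 0 → 0 < g X X
  /-- the Lie bracket of vector fields -/
  bracket : V →ₗ[ℝ] V →ₗ[ℝ] V
  bracket_skew : ∀ X Y : V, bracket X Y = - bracket Y X
  jacobi : ∀ X Y Z : V,
    bracket X (bracket Y Z) + bracket Y (bracket Z X) + bracket Z (bracket X Y) = 0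
  /-- the `(1,1)`-tensor field `f` -/
  f : V →ₗ[ℝ] V
  /-- the structure vector fields `ξ_1, …, ξ_s` -/
  ξ : Fin s → V
  /-- the dual `1`-forms `η^1, …, η^s` -/
  η : Fin s → V →ₗ[ℝ] ℝ
  /-- `f² = -I + Σ_α η^α ⊗ ξ_α` -/
  f_sq : ∀ X : V, f (f X) = -X + ∑ a : Fin s, η a X • ξ a
  /-- `η^α(ξ_β) = δ_{αβ}` -/
  eta_xi : ∀ a b : Fin s, η a (ξ b) = if a = b then (1 : ℝ) else 0
  /-- `fξ_α = 0` -/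
  f_xi : ∀ a : Fin s, f (ξ a) = 0
  /-- `η^α ∘ f = 0` -/
  eta_f : ∀ (a : Fin s) (X : V), η a (f X) = 0
  /-- `g(fX, fY) = g(X,Y) - Σ_α η^α(X) η^α(Y)` -/
  g_ff : ∀ X Y : V, g (f X) (f Y) = g X Y - ∑ a : Fin s, η a X * η a Y
  /-- `η^α(X) = g(X, ξ_α)` -/
  eta_eq_g : ∀ (a : Fin s) (X : V), η a X = g X (ξ a)
  /-- `g(X, fY) = -g(fX, Y)` -/
  g_skew_f : ∀ X Y : V, g X (f Y) = - g (f X) Y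
  /-- the Riemannian (Levi-Civita) connection of `g` -/
  nabla : V →ₗ[ℝ] V →ₗ[ℝ] V
  /-- `∇ g = 0` (scalar products of adapted fields being constant) -/
  nabla_metric : ∀ X Y Z : V, g (nabla X Y) Z + g Y (nabla X Z) = 0
  /-- `∇` is torsion-free -/
  nabla_torsion_free : ∀ X Y : V, nabla X Y - nabla Y X = bracket X Y
  /-- normality: `[f,f] + 2 Σ_α dη^α ⊗ ξ_α = 0`, where `2dη^α(X,Y) = -η^α([X,Y])` -/
  normal : ∀ X Y : V,
    f (f (bracket X Y)) + bracket (f X) (f Y)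
      - f (bracket (f X) Y) - f (bracket X (f Y))
      - ∑ a : Fin s, η a (bracket X Y) • ξ a = 0
  /-- `Φ = dη^α` for every `α`, i.e. `g(X, fY) = -(1/2) η^α([X,Y])` -/
  Phi_eq_deta : ∀ (a : Fin s) (X Y : V), g X (f Y) = -(1/2) * η a (bracket X Y)
  /-- an adapted (local) orthonormal frame `{e_1, …, e_{2n}, ξ_1, …, ξ_s}` -/
  frame : Fin (2 * n + s) → V
  frame_orthonormal : ∀ i j : Fin (2 * n + s),
    g (frame i) (frame j) = if i = j then (1 : ℝ) else 0
  frame_spans : Submodule.span ℝ (Set.range frame) = ⊤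
  /-- the first `2n` frame fields lie in the distribution `L` -/
  frame_L : ∀ i : Fin (2 * n + s), (i : ℕ) < 2 * n → ∀ a : Fin s, η a (frame i) = 0
  /-- the last `s` frame fields are the structure vector fields -/
  frame_xi : ∀ a : Fin s,
    frame ⟨2 * n + (a : ℕ), Nat.add_lt_add_left a.isLt (2 * n)⟩ = ξ a

attribute [instance] SManifold.instAddCommGroup SManifold.instModule

namespace SManifold

variable {n s : ℕ} (M : SManifold n s)

/-- the Riemannian connection, as a plain binary operation on vector fields -/
def nablaF : M.V → M.V → M.V := fun X Y => M.nabla X Y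

/-- the curvature operator `R(X,Y)Z = D_X D_Y Z - D_Y D_X Z - D_{[X,Y]} Z`
of a linear connection `D` -/
def curv (D : M.V → M.V → M.V) (X Y Z : M.V) : M.V :=
  D X (D Y Z) - D Y (D X Z) - D (M.bracket X Y) Z

/-- the `(0,4)`-curvature tensor `R(X,Y,Z,W) = g(R(X,Y)Z, W)` of a connection `D` -/
def quad (D : M.V → M.V → M.V) (X Y Z W : M.V) : ℝ :=
  M.g (M.curv D X Y Z) W

/-- the sectional curvature `K(X,Y) = R(X,Y,Y,X) / (g(X,X)g(Y,Y) - g(X,Y)²)`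
of the plane section spanned by `X` and `Y`, with respect to a connection `D` -/
noncomputable def sec (D : M.V → M.V → M.V) (X Y : M.V) : ℝ :=
  M.quad D X Y Y X / (M.g X X * M.g Y Y - (M.g X Y) ^ 2)

/-- membership in the distribution `L` orthogonal to `ξ_1, …, ξ_s` -/
def inL (X : M.V) : Prop := ∀ a : Fin s, M.η a X = 0

/-- `X`, `Y` are orthonormal vector fields -/
def onPair (X Y : M.V) : Prop := M.g X X = 1 ∧ M.g Y Y = 1 ∧ M.g X Y = 0

/-- the connection `D` has constant sectional curvature `c` -/
def constSec (D : M.V → M.V → M.V) (c : ℝ) : Prop :=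
  ∀ X Y : M.V, M.onPair X Y → M.sec D X Y = c

/-- the connection `D` has constant `L`-sectional curvature `c`: the sectional
curvature of every plane section spanned by vector fields of `L` equals `c` -/
def constLSec (D : M.V → M.V → M.V) (c : ℝ) : Prop :=
  ∀ X Y : M.V, M.inL X → M.inL Y → M.onPair X Y → M.sec D X Y = c

/-- `M` is an `S`-space-form of constant `f`-sectional curvature `c`: every
`f`-section, i.e. plane spanned by a unit `X ∈ L` and `fX`, has curvature `c`
with respect to the Riemannian connection -/
def constFSec (c : ℝ) : Prop :=
  ∀ X : M.V, M.inL X → M.g X X = 1 → M.sec M.nablaF X (M.f X) = c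

/-- the scalar curvature `τ = (1/2) Σ_{i,j} K(e_i,e_j)` of a connection `D`,
computed from `R(e_i,e_j,e_j,e_i)` in the adapted orthonormal frame -/
noncomputable def scalar (D : M.V → M.V → M.V) : ℝ :=
  (1 / 2) * ∑ i : Fin (2 * n + s), ∑ j : Fin (2 * n + s),
    M.quad D (M.frame i) (M.frame j) (M.frame j) (M.frame i)

/-- the semi-symmetric metric connection
`∇*_X Y = ∇_X Y + Σ_j η^j(Y) X - Σ_j g(X,Y) ξ_j` -/
def ssMetric (X Y : M.V) : M.V :=
  M.nabla X Y + (∑ j : Fin s, M.η j Y • X) - ∑ j : Fin s, M.g X Y • M.ξ j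

/-- the semi-symmetric non-metric connection `∇̃_X Y = ∇_X Y + Σ_j η^j(Y) X` -/
def ssNonMetric (X Y : M.V) : M.V :=
  M.nabla X Y + ∑ j : Fin s, M.η j Y • X

end SManifold

/-!
On an `S`-manifold every `ξ_j` is a Killing field and `Φ = dη^j`, which together force
`∇_X ξ_j = -fX`. Write `∇*_X Y = ∇_X Y + π(Y) X - g(X,Y) P` with `P = Σ_j ξ_j` and
`π = Σ_j η^j`. Expanding the curvature of `∇*` with `∇_X P = -s fX`, `π(P) = s` and
`π(∇_X Y) = s g(Y, fX)` gives
`R*(X,Y,Y,X) = R(X,Y,Y,X) - s (|X|²|Y|² - g(X,Y)²) + |π(X) Y - π(Y) X|²`,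
while `R(X,ξ_a,ξ_a,X) = |fX|²`. Evaluating `π` on `L` and on the `ξ_a` gives the three cases;
the reversed sections follow because `∇*` is metric, so `K*` is symmetric.
-/

namespace SManifold

variable {n s : ℕ} (M : SManifold n s)

lemma eq_zero_of_forall_g_eq_zero {W : M.V} (h : ∀ Y, M.g W Y = 0) : W = 0 :=
  by_contra fun hW => (M.g_pos W hW).ne' (h W)

lemma g_xi_left (a : Fin s) (X : M.V) : M.g (M.ξ a) X = M.η a X := by
  rw [M.g_symm, M.eta_eq_g]

lemma g_xi_xi (a b : Fin s) : M.g (M.ξ a) (M.ξ b) = if a = b then 1 else 0 := by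
  rw [g_xi_left, eta_xi]

lemma g_self_f (X : M.V) : M.g X (M.f X) = 0 := by
  linarith [M.g_skew_f X X, M.g_symm X (M.f X)]

lemma g_f_self (X : M.V) : M.g (M.f X) X = 0 := by
  rw [M.g_symm, g_self_f]

lemma eta_bracket_xi (a b : Fin s) (X : M.V) : M.η a (M.bracket X (M.ξ b)) = 0 := by
  have h := M.Phi_eq_deta a X (M.ξ b)
  rw [M.f_xi, map_zero] at h
  linarith

lemma eta_xi_bracket (a b : Fin s) (X : M.V) : M.η a (M.bracket (M.ξ b) X) = 0 := by
  rw [M.bracket_skew, map_neg, eta_bracket_xi, neg_zero]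

lemma bracket_xi_eq_neg_f (b : Fin s) (X : M.V) :
    M.bracket X (M.ξ b) = -M.f (M.bracket (M.f X) (M.ξ b)) := by
  have h := M.normal X (M.ξ b)
  simp only [M.f_xi, map_zero, M.f_sq, eta_bracket_xi, zero_smul, Finset.sum_const_zero,
    add_zero, sub_zero] at h
  linear_combination (norm := abel) -h

lemma bracket_xi_xi (a b : Fin s) : M.bracket (M.ξ a) (M.ξ b) = 0 := by
  simpa [M.f_xi] using M.bracket_xi_eq_neg_f b (M.ξ a)

lemma bracket_f_xi (b : Fin s) (X : M.V) :
    M.bracket (M.f X) (M.ξ b) = M.f (M.bracket X (M.ξ b)) := by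
  rw [M.bracket_xi_eq_neg_f b (M.f X), M.f_sq]
  simp [bracket_xi_xi]

lemma bracket_xi_f (b : Fin s) (X : M.V) :
    M.bracket (M.ξ b) (M.f X) = M.f (M.bracket (M.ξ b) X) := by
  rw [M.bracket_skew, bracket_f_xi, M.bracket_skew (M.ξ b), map_neg]

lemma bracket_bracket_left (X Y Z : M.V) :
    M.bracket X (M.bracket Y Z) = M.bracket (M.bracket X Y) Z + M.bracket Y (M.bracket X Z) := by
  have h := M.jacobi X Y Z
  rw [M.bracket_skew Z X, M.bracket_skew Z (M.bracket X Y), map_neg] at h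
  linear_combination (norm := abel) h

/-- `ξ_b` is a Killing field. -/
lemma g_xi_bracket_add (b : Fin s) (X Z : M.V) :
    M.g (M.bracket (M.ξ b) X) Z + M.g X (M.bracket (M.ξ b) Z) = 0 := by
  have on_image_f : ∀ Y,
      M.g (M.bracket (M.ξ b) X) (M.f Y) + M.g X (M.bracket (M.ξ b) (M.f Y)) = 0 := by
    intro Y
    have h := M.eta_xi_bracket b b (M.bracket X Y)
    rw [bracket_bracket_left, map_add] at h
    rw [bracket_xi_f, M.Phi_eq_deta b, M.Phi_eq_deta b]
    linarith
  have hZ : Z = M.f (-M.f Z) + ∑ c, M.η c Z • M.ξ c := by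
    rw [map_neg, M.f_sq]; abel
  rw [hZ]
  simp only [map_add, map_sum, map_smul, smul_eq_mul, M.g_symm _ (M.ξ _), g_xi_left,
    eta_xi_bracket, bracket_xi_xi, map_zero, mul_zero, Finset.sum_const_zero, add_zero]
  exact on_image_f _

lemma g_nabla_xi_add (b : Fin s) (X Y : M.V) :
    M.g (M.nabla X (M.ξ b)) Y + M.g (M.nabla Y (M.ξ b)) X = 0 := by
  have h := M.g_xi_bracket_add b X Y
  rw [← M.nabla_torsion_free, ← M.nabla_torsion_free] at h
  simp only [map_sub, LinearMap.sub_apply] at h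
  linarith [M.nabla_metric (M.ξ b) X Y, M.g_symm X (M.nabla Y (M.ξ b))]

/-- The Killing equation gives the symmetric part of `Y ↦ g(∇_X ξ_b, Y)` and `Φ = dη^b`
its skew part. -/
lemma nabla_xi (X : M.V) (b : Fin s) : M.nabla X (M.ξ b) = -M.f X := by
  have h : ∀ Y, M.g (M.nabla X (M.ξ b) + M.f X) Y = 0 := by
    intro Y
    have hskew := M.Phi_eq_deta b X Y
    rw [← M.nabla_torsion_free, map_sub, M.eta_eq_g, M.eta_eq_g] at hskew
    rw [map_add, LinearMap.add_apply]
    linarith [M.g_nabla_xi_add b X Y, M.nabla_metric X Y (M.ξ b), M.nabla_metric Y X (M.ξ b),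
      M.g_skew_f X Y, M.g_symm X (M.nabla Y (M.ξ b)), M.g_symm Y (M.nabla X (M.ξ b))]
  exact eq_neg_of_add_eq_zero_left (M.eq_zero_of_forall_g_eq_zero h)

lemma curv_swap (D : M.V → M.V → M.V) (hneg : ∀ X Y, D (-X) Y = -D X Y) (X Y Z : M.V) :
    M.curv D Y X Z = -M.curv D X Y Z := by
  rw [curv, curv, M.bracket_skew Y X, hneg]
  abel

lemma g_curv_add_of_metric (D : M.V → M.V → M.V)
    (hD : ∀ X Y Z, M.g (D X Y) Z + M.g Y (D X Z) = 0) (X Y Z W : M.V) :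
    M.g (M.curv D X Y Z) W + M.g Z (M.curv D X Y W) = 0 := by
  simp only [curv, map_sub, LinearMap.sub_apply]
  linarith [hD X (D Y Z) W, hD X Z (D Y W), hD Y (D X Z) W, hD Y Z (D X W),
    hD (M.bracket X Y) Z W, M.g_symm (D Y Z) (D X W), M.g_symm (D X Z) (D Y W)]

lemma sec_comm_of_metric (D : M.V → M.V → M.V)
    (hD : ∀ X Y Z, M.g (D X Y) Z + M.g Y (D X Z) = 0) (hneg : ∀ X Y, D (-X) Y = -D X Y)
    (X Y : M.V) : M.sec D Y X = M.sec D X Y := by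
  have hquad : M.quad D Y X X Y = M.quad D X Y Y X := by
    rw [quad, quad, M.curv_swap D hneg, map_neg, LinearMap.neg_apply]
    linarith [M.g_curv_add_of_metric D hD X Y X Y, M.g_symm X (M.curv D X Y Y)]
  rw [sec, sec, hquad, M.g_symm Y X, mul_comm]

lemma quad_nablaF_xi (X : M.V) (a : Fin s) :
    M.quad M.nablaF X (M.ξ a) (M.ξ a) X = M.g (M.f X) (M.f X) := by
  simp only [quad, curv, nablaF, ← M.nabla_torsion_free, nabla_xi, M.f_xi, neg_zero, map_zero,
    map_neg, map_sub, LinearMap.zero_apply, LinearMap.sub_apply, LinearMap.neg_apply]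
  linarith [M.nabla_metric (M.ξ a) (M.f X) X, M.g_skew_f X (M.f X),
    M.g_skew_f X (M.nabla (M.ξ a) X), M.g_symm X (M.f (M.f X)),
    M.g_symm X (M.f (M.nabla (M.ξ a) X)), M.g_symm (M.f X) (M.nabla (M.ξ a) X)]

def xiSum : M.V := ∑ j, M.ξ j

def etaSum : M.V →ₗ[ℝ] ℝ := ∑ j, M.η j

lemma ssMetric_eq (X Y : M.V) :
    M.ssMetric X Y = M.nabla X Y + M.etaSum Y • X - M.g X Y • M.xiSum := by
  simp only [ssMetric, etaSum, xiSum, LinearMap.sum_apply, Finset.sum_smul, Finset.smul_sum]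

lemma g_xiSum_left (W : M.V) : M.g M.xiSum W = M.etaSum W := by
  simp [xiSum, etaSum, g_xi_left]

lemma g_xiSum_right (W : M.V) : M.g W M.xiSum = M.etaSum W := by
  rw [M.g_symm, g_xiSum_left]

lemma etaSum_xi (a : Fin s) : M.etaSum (M.ξ a) = 1 := by
  simp [etaSum, M.eta_xi]

lemma etaSum_xiSum : M.etaSum M.xiSum = s := by
  simp [xiSum, etaSum_xi]

lemma etaSum_eq_zero_of_inL {X : M.V} (hX : M.inL X) : M.etaSum X = 0 := by
  simp [etaSum, hX _]

lemma etaSum_nabla (X Y : M.V) : M.etaSum (M.nabla X Y) = s * M.g Y (M.f X) := by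
  have h : ∀ j, M.η j (M.nabla X Y) = M.g Y (M.f X) := fun j => by
    linarith [M.eta_eq_g j (M.nabla X Y), M.nabla_metric X Y (M.ξ j), M.nabla_xi X j,
      show M.g Y (M.nabla X (M.ξ j)) = -M.g Y (M.f X) by rw [nabla_xi, map_neg]]
  simp [etaSum, h]

lemma nabla_xiSum (X : M.V) : M.nabla X M.xiSum = -((s : ℝ) • M.f X) := by
  simp [xiSum, nabla_xi, Nat.cast_smul_eq_nsmul]

lemma ssMetric_metric (X Y Z : M.V) :
    M.g (M.ssMetric X Y) Z + M.g Y (M.ssMetric X Z) = 0 := by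
  simp only [ssMetric_eq, map_add, map_sub, map_smul, LinearMap.add_apply, LinearMap.sub_apply,
    LinearMap.smul_apply, smul_eq_mul, g_xiSum_left, g_xiSum_right]
  linear_combination M.nabla_metric X Y Z + M.etaSum Z * M.g_symm Y X

lemma ssMetric_neg_left (X Y : M.V) : M.ssMetric (-X) Y = -M.ssMetric X Y := by
  simp only [ssMetric_eq, map_neg, LinearMap.neg_apply, neg_smul, smul_neg]
  abel

lemma quad_ssMetric (X Y : M.V) :
    M.quad M.ssMetric X Y Y X = M.quad M.nablaF X Y Y X
      - s * (M.g X X * M.g Y Y - M.g X Y ^ 2)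
      + (M.etaSum X ^ 2 * M.g Y Y + M.etaSum Y ^ 2 * M.g X X
        - 2 * M.etaSum X * M.etaSum Y * M.g X Y) := by
  simp only [quad, curv, nablaF, ssMetric_eq, map_add, map_sub, map_smul, map_neg,
    LinearMap.add_apply, LinearMap.sub_apply, LinearMap.smul_apply, LinearMap.neg_apply,
    smul_eq_mul, g_xiSum_left, g_xiSum_right, etaSum_xiSum, etaSum_nabla, nabla_xiSum,
    g_f_self, g_self_f, M.g_skew_f Y X, M.g_symm Y X]
  have torsion : ∀ Z, M.g (M.bracket X Y) Z = M.g (M.nabla X Y) Z - M.g (M.nabla Y X) Z := by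
    intro Z; rw [← M.nabla_torsion_free, map_sub, LinearMap.sub_apply]
  linear_combination (-M.etaSum Y) * torsion X + M.etaSum X * torsion Y
    + M.etaSum X * M.nabla_metric X Y Y - M.etaSum X * M.nabla_metric Y X Y

lemma sec_eq_quad_of_onPair (D : M.V → M.V → M.V) {X Y : M.V} (h : M.onPair X Y) :
    M.sec D X Y = M.quad D X Y Y X := by
  rw [sec, h.1, h.2.1, h.2.2]
  simp

lemma sec_ssMetric_comm (X Y : M.V) : M.sec M.ssMetric Y X = M.sec M.ssMetric X Y :=
  M.sec_comm_of_metric _ M.ssMetric_metric M.ssMetric_neg_left X Y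

lemma sec_ssMetric_of_inL {X Y : M.V} (hX : M.inL X) (hY : M.inL Y) (h : M.onPair X Y) :
    M.sec M.ssMetric X Y = M.sec M.nablaF X Y - s := by
  rw [sec_eq_quad_of_onPair _ _ h, sec_eq_quad_of_onPair _ _ h, quad_ssMetric,
    etaSum_eq_zero_of_inL _ hX, etaSum_eq_zero_of_inL _ hY, h.1, h.2.1, h.2.2]
  ring

lemma onPair_of_inL_xi {X : M.V} (hX : M.inL X) (hXX : M.g X X = 1) (a : Fin s) :
    M.onPair X (M.ξ a) :=
  ⟨hXX, by simp [g_xi_xi], by rw [← M.eta_eq_g, hX a]⟩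

lemma sec_ssMetric_inL_xi {X : M.V} (hX : M.inL X) (hXX : M.g X X = 1) (a : Fin s) :
    M.sec M.ssMetric X (M.ξ a) = 2 - s := by
  have h := M.onPair_of_inL_xi hX hXX a
  have hfX : M.g (M.f X) (M.f X) = 1 := by simp [M.g_ff, hX _, hXX]
  rw [sec_eq_quad_of_onPair _ _ h, quad_ssMetric, quad_nablaF_xi, hfX,
    etaSum_eq_zero_of_inL _ hX, etaSum_xi, h.1, h.2.1, h.2.2]
  ring

lemma sec_ssMetric_xi_xi {a b : Fin s} (hab : a ≠ b) :
    M.sec M.ssMetric (M.ξ a) (M.ξ b) = 2 - s := by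
  have h : M.onPair (M.ξ a) (M.ξ b) := by simp [onPair, g_xi_xi, hab]
  rw [sec_eq_quad_of_onPair _ _ h, quad_ssMetric, quad_nablaF_xi, M.f_xi, etaSum_xi, etaSum_xi,
    h.1, h.2.1, h.2.2, map_zero]
  ring

end SManifold

/-- Theorem 3.4.  Let `M` be an `S`-manifold and let `∇*` be the
semi-symmetric metric connection `∇*_X Y = ∇_X Y + Σ_j η^j(Y)X − Σ_j g(X,Y)ξ_j`,
where `∇` is the Riemannian connection.  Then the sectional curvature `K*` of `∇*`
satisfies: (i) `K*(X,Y) = K(X,Y) − s` for any orthonormal `X, Y ∈ L`;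
(ii) `K*(X,ξ_α) = K*(ξ_α,X) = 2 − s` for any unit `X ∈ L`;
(iii) `K*(ξ_α,ξ_β) = K*(ξ_β,ξ_α) = 2 − s` for `α ≠ β`. -/
theorem ssMetric_sectional_curvature {n s : ℕ} (M : SManifold n s) :
    (∀ X Y : M.V, M.inL X → M.inL Y → M.onPair X Y →
      M.sec M.ssMetric X Y = M.sec M.nablaF X Y - (s : ℝ)) ∧
    (∀ X : M.V, M.inL X → M.g X X = 1 → ∀ a : Fin s,
      M.sec M.ssMetric X (M.ξ a) = 2 - (s : ℝ) ∧
      M.sec M.ssMetric (M.ξ a) X = 2 - (s : ℝ)) ∧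
    (∀ a b : Fin s, a ≠ b →
      M.sec M.ssMetric (M.ξ a) (M.ξ b) = 2 - (s : ℝ) ∧
      M.sec M.ssMetric (M.ξ b) (M.ξ a) = 2 - (s : ℝ)) := by
  refine ⟨fun X Y hX hY h => M.sec_ssMetric_of_inL hX hY h,
    fun X hX hXX a => ⟨M.sec_ssMetric_inL_xi hX hXX a, ?_⟩,
    fun a b hab => ⟨M.sec_ssMetric_xi_xi hab, M.sec_ssMetric_xi_xi hab.symm⟩⟩
  rw [M.sec_ssMetric_comm]
  exact M.sec_ssMetric_inL_xi hX hXX a
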